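/- In a real inner product space, for nested convex sets C' ⊆ C and minimizers μ' and μ of J(ν) = ‖ν‖² − 2⟨ω, ν⟩ over C' and C respectively, one has ‖μ' − μ‖² ≤ 2 J(μ') − 2 J(μ). -/

import Mathlib

/-!
By the parallelogram law, `J` at the midpoint of `μ'` and `μ` falls short of the average of
`J μ'` and `J μ` by exactly `‖μ' - μ‖² / 4`. The midpoint lies in the convex set `C`, where `μ`
minimizes `J`, and the bound follows.
-/

open scoped RealInnerProductSpace

section
variable {E : Type*} [NormedAddCommGroup E] [InnerProductSpace ℝ E]

lemma apply_midpoint_of_eq_norm_sq_sub_inner {ω : E} {J : E → ℝ}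
    (hJ : ∀ ν, J ν = ‖ν‖ ^ 2 - 2 * ⟪ω, ν⟫) (a b : E) :
    J (midpoint ℝ a b) = (J a + J b) / 2 - ‖a - b‖ ^ 2 / 4 := by
  have hpar := parallelogram_law_with_norm ℝ a b
  rw [midpoint_eq_smul_add, hJ, hJ, hJ, norm_smul, inner_smul_right, inner_add_right, invOf_eq_inv,
    norm_inv, Real.norm_ofNat]
  linear_combination hpar / 4

lemma norm_sub_sq_le_of_isMinOn {ω : E} {J : E → ℝ}
    (hJ : ∀ ν, J ν = ‖ν‖ ^ 2 - 2 * ⟪ω, ν⟫) {C : Set E} (hC : Convex ℝ C) {μ ν : E}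
    (hμ : IsMinOn J C μ) (hμC : μ ∈ C) (hνC : ν ∈ C) :
    ‖ν - μ‖ ^ 2 ≤ 2 * (J ν - J μ) := by
  have hmid : J μ ≤ J (midpoint ℝ ν μ) := hμ (hC.midpoint_mem hνC hμC)
  rw [apply_midpoint_of_eq_norm_sq_sub_inner hJ] at hmid
  linarith

end

theorem stmt_4_general {E : Type*} [NormedAddCommGroup E] [InnerProductSpace ℝ E]
    (ω : E) {C' C : Set E} (hC : Convex ℝ C) (hsub : C' ⊆ C)
    (J : E → ℝ) (hJ : ∀ ν, J ν = ‖ν‖ ^ 2 - 2 * ⟪ω, ν⟫)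
    {μ' μ : E} (hμ'C : μ' ∈ C') (hμC : μ ∈ C)
    (hmin : ∀ ν ∈ C, J μ ≤ J ν) :
    ‖μ' - μ‖ ^ 2 ≤ 2 * (J μ' - J μ) :=
  norm_sub_sq_le_of_isMinOn hJ hC (isMinOn_iff.mpr hmin) hμC (hsub hμ'C)

theorem stmt_4 {E : Type*} [NormedAddCommGroup E] [InnerProductSpace ℝ E]
    (ω : E) {C' C : Set E} (hC' : Convex ℝ C') (hC : Convex ℝ C) (hsub : C' ⊆ C)
    (J : E → ℝ) (hJ : ∀ ν, J ν = ‖ν‖ ^ 2 - 2 * ⟪ω, ν⟫)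
    {μ' μ : E} (hμ'C : μ' ∈ C') (hμC : μ ∈ C)
    (hmin' : ∀ ν ∈ C', J μ' ≤ J ν) (hmin : ∀ ν ∈ C, J μ ≤ J ν) :
    ‖μ' - μ‖ ^ 2 ≤ 2 * (J μ' - J μ) :=
  stmt_4_general ω hC hsub J hJ hμ'C hμC hmin
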